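/- Let ψ : [t₀, ∞) → ℝ₊ be continuous, non-increasing, with ψ(t) < 1/t for all sufficiently large t, and suppose inf over t₀ < t < t₁ of (1/t − ψ(t)) is positive for all large t₀ and all t₁ > t₀. Then there exists (indeed uncountably many) α ∈ ℝ such that the system ⟨αq⟩² / ψ(t)² + q²/t² < 2/√3 fails to have a solution q ∈ ℕ for an unbounded set of t; that is, D₂(ψ)ᶜ ≠ ∅. -/

import Mathlib

/-- distance from a real number to a nearest integer -/
noncomputable def nearestIntDist (x : ℝ) : ℝ := |x - round x|

/-- membership in `D₂(ψ)`: for all sufficiently large `t` there is `q ∈ ℕ` with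
`(⟨αq⟩/ψ(t))² + (q/t)² < 2/√3` -/
noncomputable def memD2 (ψ : ℝ → ℝ) (α : ℝ) : Prop :=
  ∃ T : ℝ, ∀ t : ℝ, T ≤ t → ∃ q : ℕ, 0 < q ∧
    nearestIntDist (α * q) ^ 2 / ψ t ^ 2 + (q : ℝ) ^ 2 / t ^ 2 < 2 / Real.sqrt 3

/-!
Call `x = κ / (2N)` a centre when `κ² + 3 = 4NM` for some integer `M`, i.e. when `x` is the real
part of a root of the form `F = N X² - κ X Y + M Y²` of discriminant `-3`. At `t = √(2N/√3)` the
identity `t² (x q - r)² + q² / t² = (2/√3) F(r, q)` and `F(r, q) ≥ 1` show that no `q` solves the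
system for `α = x` even with `ψ(t)` replaced by `1/t`; since `ψ(t) < 1/t`, the failure persists on
a neighbourhood of `x`. The centres are the real parts of the `SL₂(ℤ)`-orbit of `e^{iπ/3}`, which
are dense with arbitrarily large `N`. So the `α` failing at arbitrarily large `t` contain a dense
`G_δ`, which is uncountable by Baire's theorem.
-/

open Filter Topology Set

theorem not_countable_of_mem_residual {X : Type*} [TopologicalSpace X] [BaireSpace X]
    [Nonempty X] [T1Space X] [∀ x : X, (𝓝[≠] x).NeBot] {s : Set X} (hs : s ∈ residual X) :
    ¬ s.Countable := by
  intro hc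
  have hcompl : sᶜ ∈ residual X := by
    rw [← biUnion_of_singleton s, compl_iUnion₂]
    exact (countable_bInter_mem hc).2 fun x _ =>
      residual_of_dense_open isOpen_compl_singleton (dense_compl_singleton x)
  simpa using (dense_of_mem_residual (inter_mem hs hcompl)).nonempty

theorem lipschitzWith_nearestIntDist : LipschitzWith 1 nearestIntDist :=
  LipschitzWith.of_le_add fun x y => calc
    nearestIntDist x ≤ |x - round y| := round_le x (round y)
    _ ≤ |x - y| + |y - round y| := abs_sub_le x y _
    _ = nearestIntDist y + dist x y := add_comm _ _

@[fun_prop]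
theorem continuous_nearestIntDist : Continuous nearestIntDist :=
  lipschitzWith_nearestIntDist.continuous

theorem one_le_quadForm_of_disc_eq_neg_three {κ N M : ℤ} (hN : 0 < N)
    (hdisc : κ ^ 2 + 3 = 4 * N * M) (r : ℤ) {q : ℤ} (hq : q ≠ 0) :
    1 ≤ N * r ^ 2 - κ * q * r + M * q ^ 2 := by
  have hsq : 4 * N * (N * r ^ 2 - κ * q * r + M * q ^ 2) =
      (κ * q - 2 * N * r) ^ 2 + 3 * q ^ 2 := by
    linear_combination (-q ^ 2) * hdisc
  have : 0 < 4 * N * (N * r ^ 2 - κ * q * r + M * q ^ 2) := by rw [hsq]; positivity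
  have := pos_of_mul_pos_right this (by positivity)
  omega

theorem two_div_sqrt_three_le_of_disc_eq_neg_three {κ N M : ℤ} (hN : 0 < N)
    (hdisc : κ ^ 2 + 3 = 4 * N * M) {t : ℝ} (ht : t ^ 2 = 2 / √3 * N) {q : ℕ} (hq : 0 < q)
    (r : ℤ) : 2 / √3 ≤ t ^ 2 * ((κ / (2 * N) : ℝ) * q - r) ^ 2 + (q : ℝ) ^ 2 / t ^ 2 := by
  have hc : (0 : ℝ) < 2 / √3 := by positivity
  have hs3 : √3 ^ 2 = (3 : ℝ) := Real.sq_sqrt (by norm_num)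
  have hNR : (0 : ℝ) < N := by exact_mod_cast hN
  have hF : (1 : ℝ) ≤ ((N * r ^ 2 - κ * q * r + M * q ^ 2 : ℤ) : ℝ) := by
    exact_mod_cast one_le_quadForm_of_disc_eq_neg_three hN hdisc r (by omega)
  have hdiscR : (κ : ℝ) ^ 2 + 3 = 4 * N * M := by exact_mod_cast hdisc
  calc 2 / √3 ≤ 2 / √3 * ((N * r ^ 2 - κ * q * r + M * q ^ 2 : ℤ) : ℝ) :=
        le_mul_of_one_le_right hc.le hF
    _ = t ^ 2 * ((κ / (2 * N) : ℝ) * q - r) ^ 2 + (q : ℝ) ^ 2 / t ^ 2 := by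
      rw [ht]
      push_cast
      field_simp
      linear_combination (-(q : ℝ) ^ 2) * (hdiscR + hs3)

def noSolutionSet (p t : ℝ) : Set ℝ :=
  {α | ∀ q : ℕ, 0 < q → 2 / √3 ≤ nearestIntDist (α * q) ^ 2 / p ^ 2 + (q : ℝ) ^ 2 / t ^ 2}

theorem two_div_sqrt_three_le_sq_div_or_lt_of_disc_eq_neg_three {κ N M : ℤ} (hN : 0 < N)
    (hdisc : κ ^ 2 + 3 = 4 * N * M) {t p : ℝ} (ht₀ : 0 < t) (ht : t ^ 2 = 2 / √3 * N)
    (hp : 0 < p) (hpt : p < 1 / t) {q : ℕ} (hq : 0 < q) :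
    2 / √3 ≤ (q : ℝ) ^ 2 / t ^ 2 ∨
      2 / √3 < nearestIntDist ((κ / (2 * N) : ℝ) * q) ^ 2 / p ^ 2 + (q : ℝ) ^ 2 / t ^ 2 := by
  set α₀ : ℝ := κ / (2 * N)
  have key : 2 / √3 ≤ t ^ 2 * (α₀ * q - round (α₀ * q)) ^ 2 + (q : ℝ) ^ 2 / t ^ 2 :=
    two_div_sqrt_three_le_of_disc_eq_neg_three hN hdisc ht hq _
  rcases eq_or_ne (α₀ * q - round (α₀ * q)) 0 with h0 | h0
  · left
    simpa [h0] using key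
  · right
    have ht2 : t ^ 2 < 1 / p ^ 2 := by
      rw [lt_div_iff₀ ht₀] at hpt
      rw [lt_div_iff₀ (by positivity), ← mul_pow, mul_comm]
      exact pow_lt_one₀ (by positivity) hpt two_ne_zero
    calc 2 / √3 ≤ t ^ 2 * (α₀ * q - round (α₀ * q)) ^ 2 + (q : ℝ) ^ 2 / t ^ 2 := key
      _ < nearestIntDist (α₀ * q) ^ 2 / p ^ 2 + (q : ℝ) ^ 2 / t ^ 2 := by
        rw [nearestIntDist, sq_abs, div_eq_mul_one_div _ (p ^ 2), mul_comm _ (1 / p ^ 2)]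
        gcongr

theorem noSolutionSet_mem_nhds {κ N M : ℤ} (hN : 0 < N) (hdisc : κ ^ 2 + 3 = 4 * N * M)
    {t p : ℝ} (ht₀ : 0 < t) (ht : t ^ 2 = 2 / √3 * N) (hp : 0 < p) (hpt : p < 1 / t) :
    noSolutionSet p t ∈ 𝓝 ((κ : ℝ) / (2 * N)) := by
  obtain ⟨K, hK⟩ := exists_nat_ge (2 / √3 * t ^ 2)
  have hfar : ∀ q : ℕ, 0 < q → K ≤ q → ∀ α : ℝ,
      2 / √3 ≤ nearestIntDist (α * q) ^ 2 / p ^ 2 + (q : ℝ) ^ 2 / t ^ 2 := by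
    intro q hq hKq α
    have hqK : (K : ℝ) ≤ (q : ℝ) ^ 2 := by
      have : (K : ℝ) ≤ q := by exact_mod_cast hKq
      have : (1 : ℝ) ≤ q := by exact_mod_cast hq
      nlinarith
    calc 2 / √3 ≤ (q : ℝ) ^ 2 / t ^ 2 := by rw [le_div_iff₀ (by positivity)]; linarith
      _ ≤ _ := le_add_of_nonneg_left (by positivity)
  have hnear : ∀ q ∈ Finset.Ioo 0 K, ∀ᶠ α in 𝓝 ((κ : ℝ) / (2 * N)),
      2 / √3 ≤ nearestIntDist (α * q) ^ 2 / p ^ 2 + (q : ℝ) ^ 2 / t ^ 2 := by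
    intro q hq
    rcases two_div_sqrt_three_le_sq_div_or_lt_of_disc_eq_neg_three hN hdisc ht₀ ht hp hpt
      (Finset.mem_Ioo.1 hq).1 with h | h
    · exact .of_forall fun α => h.trans (le_add_of_nonneg_left (by positivity))
    · have hcont : Continuous fun α : ℝ =>
          nearestIntDist (α * q) ^ 2 / p ^ 2 + (q : ℝ) ^ 2 / t ^ 2 := by fun_prop
      exact (hcont.tendsto _ |>.eventually (lt_mem_nhds h)).mono fun _ => le_of_lt
  filter_upwards [(eventually_all_finset _).2 hnear] with α hα q hq
  rcases lt_or_ge q K with hqK | hKq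
  · exact hα q (Finset.mem_Ioo.2 ⟨hq, hqK⟩)
  · exact hfar q hq hKq α

def discNegThreeCenters (n : ℤ) : Set ℝ :=
  {x | ∃ κ N M : ℤ, n ≤ N ∧ 0 < N ∧ κ ^ 2 + 3 = 4 * N * M ∧ x = κ / (2 * N)}

theorem exists_mem_discNegThreeCenters_near {n a b c d : ℤ} (hdet : a * d - b * c = 1)
    (hc : 0 < c) (hd : 0 < d) (hnd : n ≤ d) :
    ∃ x ∈ discNegThreeCenters n, |x - a / c| ≤ 1 / d := by
  -- `κ / (2N)` is the real part of `(a ρ + b) / (c ρ + d)` for `ρ = e^{iπ/3}`, and `N = |c ρ + d|²`.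
  set N := c ^ 2 + c * d + d ^ 2 with hN
  set κ := 2 * a * c + 2 * b * d + a * d + b * c
  have hdN : d ≤ N := by nlinarith
  have hdisc : κ ^ 2 + 3 = 4 * N * (a ^ 2 + a * b + b ^ 2) := by
    linear_combination (-3 * (a * d - b * c + 1)) * hdet
  refine ⟨κ / (2 * N), ⟨κ, N, _, hnd.trans hdN, by omega, hdisc, rfl⟩, ?_⟩
  have hcR : (1 : ℝ) ≤ c := by exact_mod_cast hc
  have hdR : (1 : ℝ) ≤ d := by exact_mod_cast hd
  have hNR : (N : ℝ) = c ^ 2 + c * d + d ^ 2 := by push_cast [hN]; ring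
  have hdetR : (a : ℝ) * d - b * c = 1 := by exact_mod_cast hdet
  have hdiff : (κ : ℝ) / (2 * N) - a / c = -((c + 2 * d) / (2 * N * c)) := by
    rw [hNR]
    field_simp
    simp only [κ]
    push_cast
    linear_combination (-(c + 2 * d : ℝ)) * hdetR
  rw [hdiff, abs_neg, abs_of_nonneg (by positivity),
    div_le_div_iff₀ (by positivity) (by positivity), hNR]
  nlinarith [mul_nonneg (sub_nonneg.2 hcR) (by positivity : (0 : ℝ) ≤ c * d + d ^ 2),
    (by positivity : (0 : ℝ) ≤ c ^ 3)]

theorem dense_discNegThreeCenters (n : ℤ) : Dense (discNegThreeCenters n) := by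
  suffices h : ∀ ρ : ℚ, (ρ : ℝ) ∈ closure (discNegThreeCenters n) from
    dense_closure.1 (Rat.denseRange_cast.mono (range_subset_iff.2 h))
  intro ρ
  rw [Metric.mem_closure_iff]
  intro ε hε
  obtain ⟨u, v, huv⟩ : IsCoprime ρ.num ρ.den := by
    rw [Int.isCoprime_iff_gcd_eq_one]; exact ρ.reduced
  obtain ⟨K, hK⟩ := exists_nat_gt (max (n : ℝ) (1 / ε) + |(u : ℝ)|)
  set d : ℤ := u + K * ρ.den
  have hden : (0 : ℤ) < ρ.den := by exact_mod_cast ρ.pos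
  have hKd : max (n : ℝ) (1 / ε) < d := by
    have : (K : ℝ) ≤ K * ρ.den :=
      le_mul_of_one_le_right (by positivity) (by exact_mod_cast ρ.pos)
    have := neg_abs_le (u : ℝ)
    push_cast [d]
    linarith
  have hεd : 1 / ε < d := (le_max_right _ _).trans_lt hKd
  have hd : (0 : ℝ) < d := (by positivity : (0 : ℝ) < 1 / ε).trans hεd
  obtain ⟨x, hx, hxρ⟩ := exists_mem_discNegThreeCenters_near (a := ρ.num) (b := -v + K * ρ.num)
    (c := ρ.den) (d := d) (by linear_combination huv) hden (by exact_mod_cast hd)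
    (by exact_mod_cast (le_max_left _ _).trans hKd.le)
  rw [Int.cast_natCast] at hxρ
  refine ⟨x, hx, ?_⟩
  rw [Real.dist_eq, abs_sub_comm, Rat.cast_def]
  exact hxρ.trans_lt (by rwa [div_lt_comm₀ hd hε])

theorem D2_complement_uncountable (t₀ : ℝ) (ψ : ℝ → ℝ)
    (hpos : ∀ t ≥ t₀, 0 < ψ t)
    (hlt : ∃ T ≥ t₀, ∀ t ≥ T, ψ t < 1 / t) :
    ¬ Set.Countable {α : ℝ | ¬ memD2 ψ α} := by
  obtain ⟨T, hTt₀, hT⟩ := hlt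
  set U : ℕ → Set ℝ := fun m => ⋃ t ≥ (m : ℝ), interior (noSolutionSet (ψ t) t)
  have hU_dense : ∀ m, Dense (U m) := by
    intro m
    obtain ⟨n, hn⟩ := exists_int_ge (max (m : ℝ) T ^ 2 / (2 / √3))
    refine (dense_discNegThreeCenters n).mono ?_
    rintro _ ⟨κ, N, M, hnN, hN, hdisc, rfl⟩
    set t := √(2 / √3 * N)
    have hcN : 0 < 2 / √3 * (N : ℝ) := by positivity
    have hmaxt : max (m : ℝ) T ≤ t := by
      refine (le_abs_self _).trans (Real.abs_le_sqrt ?_)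
      rw [div_le_iff₀' (by positivity)] at hn
      exact hn.trans (mul_le_mul_of_nonneg_left (by exact_mod_cast hnN) (by positivity))
    have ht₀ : 0 < t := Real.sqrt_pos.2 hcN
    have hTt : T ≤ t := (le_max_right _ _).trans hmaxt
    refine mem_iUnion₂.2 ⟨t, (le_max_left _ _).trans hmaxt, mem_interior_iff_mem_nhds.2 ?_⟩
    exact noSolutionSet_mem_nhds hN hdisc ht₀ (Real.sq_sqrt hcN.le) (hpos t (hTt₀.trans hTt))
      (hT t hTt)
  have hU_sub : ⋂ m, U m ⊆ {α | ¬ memD2 ψ α} := by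
    rintro α hα ⟨T₀, hT₀⟩
    obtain ⟨m, hm⟩ := exists_nat_ge T₀
    obtain ⟨t, hmt, hαt⟩ := mem_iUnion₂.1 (mem_iInter.1 hα m)
    obtain ⟨q, hq, hlt⟩ := hT₀ t (hm.trans hmt)
    exact (interior_subset hαt q hq).not_gt hlt
  refine not_countable_of_mem_residual (mem_of_superset ?_ hU_sub)
  exact countable_iInter_mem.2 fun m =>
    residual_of_dense_open (isOpen_biUnion fun _ _ => isOpen_interior) (hU_dense m)
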